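/- Let (P, x_L, x_R) be a finite oriented poset with weight function w into a commutative ring R. Then the trace of the down weight matrix equals the sum of the weights of all lower sets I of P satisfying (x_R ∈ I implies x_L ∈ I), and the trace of the up weight matrix equals the sum of the weights of all lower sets I of P satisfying (x_L ∈ I implies x_R ∈ I). Equivalently, trace(M_w(P↘)) and trace(M_w(P↗)) are the weight polynomials of the looped posets ↻(P↘) and ↻(P↗) obtained from P by adding the relation x_L ≤ x_R, respectively x_R ≤ x_L, and taking the generated order. -/
import Mathlib


open Classical Relation

noncomputable section

variable {R : Type*} [CommRing R]

/-- A finite set `I` is a lower set (order ideal) for the relation `r`. -/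
def IsLowerSetRel {α : Type*} (r : α → α → Prop) (I : Finset α) : Prop :=
  ∀ x ∈ I, ∀ y, r y x → y ∈ I

/-- The sum of the weights `∏ i ∈ I, w i` over all lower sets `I` of the relation `r`
satisfying the condition `C`.  Taking `C = fun _ => True` gives the weight polynomial. -/
def wSum {α : Type*} [Fintype α] (r : α → α → Prop) (w : α → R) (C : Finset α → Prop) : R :=
  ∑ I ∈ Finset.univ.filter (fun I : Finset α => IsLowerSetRel r I ∧ C I), ∏ i ∈ I, w i

/-- The down weight matrix `M_w(P↘)` of an oriented poset `(P, xL, xR)`. -/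
def downMat {α : Type*} [Fintype α] (r : α → α → Prop) (w : α → R) (xL xR : α) :
    Matrix (Fin 2) (Fin 2) R :=
  !![wSum r w (fun _ => True), -wSum r w (fun I => xR ∈ I);
     wSum r w (fun I => xL ∉ I), -wSum r w (fun I => xR ∈ I ∧ xL ∉ I)]

/-- The up weight matrix `M_w(P↗)` of an oriented poset `(P, xL, xR)`. -/
def upMat {α : Type*} [Fintype α] (r : α → α → Prop) (w : α → R) (xL xR : α) :
    Matrix (Fin 2) (Fin 2) R :=
  !![wSum r w (fun I => xR ∈ I), wSum r w (fun I => xR ∉ I);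
     wSum r w (fun I => xR ∈ I ∧ xL ∉ I), wSum r w (fun I => xR ∉ I ∧ xL ∉ I)]

/-- The order relation of the glued poset `P↘Q` on the disjoint union `P ⊔ Q`:
elements of `P` (resp. `Q`) compare as in `P` (resp. `Q`), an element `a ∈ Q` lies below
`b ∈ P` iff `a ≤ yL` in `Q` and `xR ≤ b` in `P`, and no element of `P` lies below an
element of `Q`. -/
def glueDown {α β : Type*} (rP : α → α → Prop) (rQ : β → β → Prop) (xR : α) (yL : β) :
    α ⊕ β → α ⊕ β → Prop
  | .inl a, .inl b => rP a b
  | .inr a, .inr b => rQ a b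
  | .inr a, .inl b => rQ a yL ∧ rP xR b
  | .inl _, .inr _ => False

/-- The order relation of the glued poset `P↗Q` on the disjoint union `P ⊔ Q`:
elements of `P` (resp. `Q`) compare as in `P` (resp. `Q`), an element `a ∈ P` lies below
`b ∈ Q` iff `a ≤ xR` in `P` and `yL ≤ b` in `Q`, and no element of `Q` lies below an
element of `P`. -/
def glueUp {α β : Type*} (rP : α → α → Prop) (rQ : β → β → Prop) (xR : α) (yL : β) :
    α ⊕ β → α ⊕ β → Prop
  | .inl a, .inl b => rP a b
  | .inr a, .inr b => rQ a b
  | .inl a, .inr b => rP a xR ∧ rQ yL b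
  | .inr _, .inl _ => False

lemma wSum_congr {α : Type*} [Fintype α] (r r' : α → α → Prop) (w : α → R)
    (C C' : Finset α → Prop)
    (h : ∀ I : Finset α, (IsLowerSetRel r I ∧ C I) ↔ (IsLowerSetRel r' I ∧ C' I)) :
    wSum r w C = wSum r' w C' := by
  unfold wSum
  congr 1
  ext J
  simp only [Finset.mem_filter, Finset.mem_univ, true_and, h J]

lemma wSum_split {α : Type*} [Fintype α] (r : α → α → Prop) (w : α → R)
    (C D : Finset α → Prop) :
    wSum r w D = wSum r w (fun I => D I ∧ C I) + wSum r w (fun I => D I ∧ ¬ C I) := by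
  unfold wSum
  rw [← Finset.sum_filter_add_sum_filter_not
    (Finset.univ.filter (fun I : Finset α => IsLowerSetRel r I ∧ D I)) C]
  have e1 : (Finset.univ.filter (fun I : Finset α => IsLowerSetRel r I ∧ D I)).filter C =
      Finset.univ.filter (fun I : Finset α => IsLowerSetRel r I ∧ D I ∧ C I) := by
    ext J; simp only [Finset.mem_filter, Finset.mem_univ, true_and]; tauto
  have e2 : (Finset.univ.filter (fun I : Finset α => IsLowerSetRel r I ∧ D I)).filter
      (fun I => ¬ C I) =
      Finset.univ.filter (fun I : Finset α => IsLowerSetRel r I ∧ D I ∧ ¬ C I) := by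
    ext J; simp only [Finset.mem_filter, Finset.mem_univ, true_and]; tauto
  rw [e1, e2]
  congr 1 <;> apply Finset.sum_congr ?_ (fun _ _ => rfl) <;>
    · ext J
      simp only [Finset.mem_filter, Finset.mem_univ, true_and]

lemma isLowerSetRel_loop_iff {α : Type*} [PartialOrder α] (a0 b0 : α) (I : Finset α) :
    IsLowerSetRel (ReflTransGen (fun a b : α => a ≤ b ∨ (a = a0 ∧ b = b0))) I ↔
      IsLowerSetRel (· ≤ ·) I ∧ (b0 ∈ I → a0 ∈ I) := by
  constructor
  · intro h
    exact ⟨fun x hx y hy => h x hx y (ReflTransGen.single (Or.inl hy)),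
      fun hb => h b0 hb a0 (ReflTransGen.single (Or.inr ⟨rfl, rfl⟩))⟩
  · rintro ⟨hl, hc⟩ x hx y hy
    have key : ∀ a b : α, ReflTransGen (fun a b : α => a ≤ b ∨ (a = a0 ∧ b = b0)) a b →
        b ∈ I → a ∈ I := by
      intro a b h
      induction h with
      | refl => exact id
      | tail h1 step ih =>
        intro hc'
        apply ih
        rcases step with hle | ⟨rfl, rfl⟩
        · exact hl _ hc' _ hle
        · exact hc hc'
    exact key y x hy hx

/-- The trace of the down (resp. up) weight matrix is the sum of weights
of lower sets with `xR ∈ I → xL ∈ I` (resp. `xL ∈ I → xR ∈ I`); equivalently, it is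
the weight polynomial of the looped poset `↻(P↘)` (resp. `↻(P↗)`) obtained by adding
the relation `xL ≤ xR` (resp. `xR ≤ xL`) and taking the generated order. -/
theorem trace_weightMat {α : Type*} [Fintype α] [PartialOrder α] (w : α → R) (xL xR : α) :
    (downMat (· ≤ ·) w xL xR).trace = wSum (· ≤ ·) w (fun I => xR ∈ I → xL ∈ I) ∧
    (upMat (· ≤ ·) w xL xR).trace = wSum (· ≤ ·) w (fun I => xL ∈ I → xR ∈ I) ∧
    (downMat (· ≤ ·) w xL xR).trace =
      wSum (ReflTransGen (fun a b : α => a ≤ b ∨ (a = xL ∧ b = xR))) w (fun _ => True) ∧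
    (upMat (· ≤ ·) w xL xR).trace =
      wSum (ReflTransGen (fun a b : α => a ≤ b ∨ (a = xR ∧ b = xL))) w (fun _ => True) := by
  have hdown : (downMat (· ≤ ·) w xL xR).trace =
      wSum (· ≤ ·) w (fun I => xR ∈ I → xL ∈ I) := by
    have hs := wSum_split (R := R) (· ≤ ·) w (fun I : Finset α => xR ∈ I ∧ xL ∉ I)
      (fun _ => True)
    have h1 : wSum (· ≤ ·) w (fun I : Finset α => True ∧ (xR ∈ I ∧ xL ∉ I)) =
        wSum (· ≤ ·) w (fun I : Finset α => xR ∈ I ∧ xL ∉ I) :=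
      wSum_congr _ _ _ _ _ (fun I => by tauto)
    have h2 : wSum (· ≤ ·) w (fun I : Finset α => True ∧ ¬ (xR ∈ I ∧ xL ∉ I)) =
        wSum (· ≤ ·) w (fun I : Finset α => xR ∈ I → xL ∈ I) :=
      wSum_congr _ _ _ _ _ (fun I => by constructor <;> rintro ⟨hI, hC⟩ <;>
        exact ⟨hI, by tauto⟩)
    simp only [downMat, Matrix.trace_fin_two_of]
    rw [hs, h1, h2]
    ring
  have hup : (upMat (· ≤ ·) w xL xR).trace =
      wSum (· ≤ ·) w (fun I => xL ∈ I → xR ∈ I) := by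
    have hs := wSum_split (R := R) (· ≤ ·) w (fun I : Finset α => xR ∈ I)
      (fun I : Finset α => xL ∈ I → xR ∈ I)
    have h1 : wSum (· ≤ ·) w (fun I : Finset α => (xL ∈ I → xR ∈ I) ∧ xR ∈ I) =
        wSum (· ≤ ·) w (fun I : Finset α => xR ∈ I) :=
      wSum_congr _ _ _ _ _ (fun I => by constructor <;> rintro ⟨hI, hC⟩ <;>
        exact ⟨hI, by tauto⟩)
    have h2 : wSum (· ≤ ·) w (fun I : Finset α => (xL ∈ I → xR ∈ I) ∧ ¬ xR ∈ I) =
        wSum (· ≤ ·) w (fun I : Finset α => xR ∉ I ∧ xL ∉ I) :=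
      wSum_congr _ _ _ _ _ (fun I => by constructor <;> rintro ⟨hI, hC⟩ <;>
        exact ⟨hI, by tauto⟩)
    simp only [upMat, Matrix.trace_fin_two_of]
    rw [hs, h1, h2]
  refine ⟨hdown, hup, ?_, ?_⟩
  · rw [hdown]
    exact wSum_congr _ _ _ _ _ (fun I => by
      rw [isLowerSetRel_loop_iff]; tauto)
  · rw [hup]
    exact wSum_congr _ _ _ _ _ (fun I => by
      rw [isLowerSetRel_loop_iff]; tauto)
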